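/- arXiv:2010.05373 — 5 statements merged into one kernel-verified Lean document; each statement's English description precedes it below -/
import Mathlib

section
/- Let $K \ge 1$, let $v_1, \dots, v_K \in \mathbb{R}$, $c \in \mathbb{R}$, and let $d$ be a positive integer. The maximum of $(c + \sum_{i=1}^K v_i \alpha_i)/(d + \sum_{i=1}^K \alpha_i)$ over $\alpha \in [0,1]^K$ is attained at the binary point $\alpha^\star$ defined by $\alpha_i^\star = 1$ if $v_i > (c + \sum_{j : v_j > v_i} v_j)/(d + |\{j : v_j > v_i\}|)$ and $\alpha_i^\star = 0$ otherwise. -/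
open Finset
open scoped Classical

/-- The binary candidate solution: `α⋆ᵢ = 1` iff
`vᵢ > (c + ∑_{j : vⱼ > vᵢ} vⱼ)/(d + #{j : vⱼ > vᵢ})`. -/
noncomputable def alphaStar (K : ℕ) (v : Fin K → ℝ) (c : ℝ) (d : ℕ) (i : Fin K) : ℝ :=
  if (c + ∑ j ∈ Finset.univ.filter (fun j => v i < v j), v j) /
      ((d : ℝ) + (Finset.univ.filter (fun j => v i < v j)).card) < v i
  then 1 else 0

/-!
Dinkelbach's argument. For a parameter `μ`, the largest value of
`c + ∑ vᵢ αᵢ - μ (d + ∑ αᵢ)` over the cube is `G μ = c - μ d + ∑ max (vᵢ - μ) 0`, attained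
at the indicator of `{i | μ < vᵢ}`. Since `d > 0`, `G` is strictly decreasing, and it vanishes
at the best ratio `λ` over binary points. Hence no point of the cube has ratio above `λ`, the
indicator of `{i | λ < vᵢ}` has ratio exactly `λ`, and the rule defining `α⋆` reads
`G (vᵢ) < 0`, that is, `λ < vᵢ`.
-/

namespace LinearFractional

variable {ι : Type*} (c d : ℝ) (v : ι → ℝ)

noncomputable def subsetRatio (S : Finset ι) : ℝ :=
  (c + ∑ i ∈ S, v i) / (d + #S)

theorem subsetRatio_le_iff (hd : 0 < d) (S : Finset ι) (μ : ℝ) :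
    subsetRatio c d v S ≤ μ ↔ c + ∑ i ∈ S, v i - μ * (d + #S) ≤ 0 := by
  rw [subsetRatio, div_le_iff₀ (by positivity), sub_nonpos]

theorem subsetRatio_lt_iff (hd : 0 < d) (S : Finset ι) (μ : ℝ) :
    subsetRatio c d v S < μ ↔ c + ∑ i ∈ S, v i - μ * (d + #S) < 0 := by
  rw [subsetRatio, div_lt_iff₀ (by positivity), sub_neg]

theorem subsetRatio_eq_iff (hd : 0 < d) (S : Finset ι) (μ : ℝ) :
    subsetRatio c d v S = μ ↔ c + ∑ i ∈ S, v i - μ * (d + #S) = 0 := by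
  rw [subsetRatio, div_eq_iff (by positivity : d + #S ≠ 0), sub_eq_zero]

variable [Fintype ι]

noncomputable def maxRatio : ℝ :=
  univ.sup' univ_nonempty (subsetRatio c d v)

noncomputable def superLevel (μ : ℝ) : Finset ι :=
  univ.filter (fun j => μ < v j)

noncomputable def dinkelbachValue (μ : ℝ) : ℝ :=
  c - μ * d + ∑ j, max (v j - μ) 0

theorem sum_mul_ite_mem [DecidableEq ι] (S : Finset ι) :
    ∑ i, v i * (if i ∈ S then 1 else 0) = ∑ i ∈ S, v i := by
  simp [mul_ite, sum_ite_mem]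

theorem sum_ite_mem_one_zero [DecidableEq ι] (S : Finset ι) :
    ∑ i, (if i ∈ S then 1 else 0 : ℝ) = #S := by
  simp [sum_ite_mem]

theorem sub_mul_le_dinkelbachValue (μ : ℝ) (α : ι → ℝ) (hα : ∀ i, 0 ≤ α i ∧ α i ≤ 1) :
    c + ∑ i, v i * α i - μ * (d + ∑ i, α i) ≤ dinkelbachValue c d v μ := by
  have hrw : c + ∑ i, v i * α i - μ * (d + ∑ i, α i)
      = c - μ * d + ∑ i, (v i - μ) * α i := by
    simp only [mul_add, sub_mul, sum_sub_distrib, mul_sum]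
    ring
  rw [hrw, dinkelbachValue]
  gcongr with i
  obtain ⟨h0, h1⟩ := hα i
  rcases le_total 0 (v i - μ) with h | h
  · exact (mul_le_of_le_one_right h h1).trans (le_max_left _ _)
  · exact (mul_nonpos_of_nonpos_of_nonneg h h0).trans (le_max_right _ _)

theorem sub_mul_card_le_dinkelbachValue (μ : ℝ) (S : Finset ι) :
    c + ∑ i ∈ S, v i - μ * (d + #S) ≤ dinkelbachValue c d v μ := by
  have h := sub_mul_le_dinkelbachValue c d v μ (fun i => if i ∈ S then 1 else 0)
    (fun i => by split_ifs <;> norm_num)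
  rwa [sum_mul_ite_mem, sum_ite_mem_one_zero] at h

theorem sub_mul_card_superLevel (μ : ℝ) :
    c + ∑ i ∈ superLevel v μ, v i - μ * (d + #(superLevel v μ)) = dinkelbachValue c d v μ := by
  have hsum : ∑ i ∈ superLevel v μ, (v i - μ) = ∑ j, max (v j - μ) 0 := by
    rw [superLevel, sum_filter]
    refine sum_congr rfl fun j _ => ?_
    split_ifs with h
    · exact (max_eq_left (sub_nonneg.2 h.le)).symm
    · exact (max_eq_right (sub_nonpos.2 (not_lt.1 h))).symm
  rw [dinkelbachValue, ← hsum, sum_sub_distrib, sum_const, nsmul_eq_mul]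
  ring

theorem strictAnti_dinkelbachValue (hd : 0 < d) : StrictAnti (dinkelbachValue c d v) := by
  intro μ₁ μ₂ h
  have hsum : ∑ j, max (v j - μ₂) 0 ≤ ∑ j, max (v j - μ₁) 0 := by
    gcongr
  have hμd : μ₁ * d < μ₂ * d := mul_lt_mul_of_pos_right h hd
  simp only [dinkelbachValue]
  linarith

theorem dinkelbachValue_maxRatio (hd : 0 < d) : dinkelbachValue c d v (maxRatio c d v) = 0 := by
  apply le_antisymm
  · rw [← sub_mul_card_superLevel, ← subsetRatio_le_iff c d v hd]
    exact le_sup' (subsetRatio c d v) (mem_univ _)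
  · obtain ⟨S, -, hS⟩ := exists_mem_eq_sup' univ_nonempty (subsetRatio c d v)
    rw [← (subsetRatio_eq_iff c d v hd S _).1 hS.symm]
    exact sub_mul_card_le_dinkelbachValue c d v _ S

theorem subsetRatio_superLevel_lt_iff (hd : 0 < d) (μ : ℝ) :
    subsetRatio c d v (superLevel v μ) < μ ↔ maxRatio c d v < μ := by
  rw [subsetRatio_lt_iff c d v hd, sub_mul_card_superLevel,
    ← dinkelbachValue_maxRatio c d v hd]
  exact (strictAnti_dinkelbachValue c d v hd).lt_iff_gt

theorem subsetRatio_superLevel_maxRatio (hd : 0 < d) :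
    subsetRatio c d v (superLevel v (maxRatio c d v)) = maxRatio c d v := by
  rw [subsetRatio_eq_iff c d v hd, sub_mul_card_superLevel,
    dinkelbachValue_maxRatio c d v hd]

theorem ratio_le_maxRatio (hd : 0 < d) (α : ι → ℝ) (hα : ∀ i, 0 ≤ α i ∧ α i ≤ 1) :
    (c + ∑ i, v i * α i) / (d + ∑ i, α i) ≤ maxRatio c d v := by
  have hden : 0 < d + ∑ i, α i :=
    add_pos_of_pos_of_nonneg hd (sum_nonneg fun i _ => (hα i).1)
  rw [div_le_iff₀ hden, ← sub_nonpos, ← dinkelbachValue_maxRatio c d v hd]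
  exact sub_mul_le_dinkelbachValue c d v _ α hα

end LinearFractional

open LinearFractional

theorem alphaStar_eq_ite (K : ℕ) (v : Fin K → ℝ) (c : ℝ) (d : ℕ) (hd : 0 < d) (i : Fin K) :
    alphaStar K v c d i = if i ∈ superLevel v (maxRatio c d v) then 1 else 0 := by
  unfold alphaStar
  simp only [superLevel, mem_filter, mem_univ, true_and]
  exact if_congr (subsetRatio_superLevel_lt_iff c d v (Nat.cast_pos.2 hd) (v i)) rfl rfl

theorem stmt5_general (K : ℕ) (v : Fin K → ℝ) (c : ℝ) (d : ℕ) (hd : 0 < d) :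
    ∀ α : Fin K → ℝ, (∀ i, 0 ≤ α i ∧ α i ≤ 1) →
      (c + ∑ i, v i * α i) / ((d : ℝ) + ∑ i, α i) ≤
        (c + ∑ i, v i * alphaStar K v c d i) / ((d : ℝ) + ∑ i, alphaStar K v c d i) := by
  intro α hα
  have hd' : (0 : ℝ) < d := Nat.cast_pos.2 hd
  simp only [alphaStar_eq_ite K v c d hd, sum_mul_ite_mem, sum_ite_mem_one_zero]
  change _ ≤ subsetRatio c d v _
  rw [subsetRatio_superLevel_maxRatio c d v hd']
  exact ratio_le_maxRatio c d v hd' α hα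

/-- The linear fractional program `max { (c + ∑ vᵢ αᵢ)/(d + ∑ αᵢ) : α ∈ [0,1]^K }`
is maximized by the binary point `α⋆`. -/
theorem stmt5 (K : ℕ) (hK : 1 ≤ K) (v : Fin K → ℝ) (c : ℝ) (d : ℕ) (hd : 0 < d) :
    ∀ α : Fin K → ℝ, (∀ i, 0 ≤ α i ∧ α i ≤ 1) →
      (c + ∑ i, v i * α i) / ((d : ℝ) + ∑ i, α i) ≤
        (c + ∑ i, v i * alphaStar K v c d i) / ((d : ℝ) + ∑ i, alphaStar K v c d i) :=
  stmt5_general K v c d hd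
end

section
/- Let $\mathcal{X} \times \mathcal{Y}$ be a Polish metric space with metric $\mathbb{D}((x,y),(x',y')) = \mathbb{D}_\mathcal{X}(x,x') + \mathbb{D}_\mathcal{Y}(y,y')$, let $\widehat{\mathbb{P}} = N^{-1}\sum_{i=1}^N \delta_{(\widehat{x}_i, \widehat{y}_i)}$, and let $\mathcal{N}_\gamma(x_0) = \{x : \mathbb{D}_\mathcal{X}(x, x_0) \le \gamma\}$. Define $\kappa_{i,\gamma} = \min_{x \in \mathcal{N}_\gamma(x_0)} \mathbb{D}_\mathcal{X}(x, \widehat{x}_i)$ (assuming $\inf_{y} \mathbb{D}_\mathcal{Y}(y,\widehat{y}_i) = 0$). Then there exists a probability measure $\mathbb{Q}$ with $\mathbb{W}_\infty(\mathbb{Q}, \widehat{\mathbb{P}}) \le \rho$ and $\mathbb{Q}(\mathcal{N}_\gamma(x_0) \times \mathcal{Y}) > 0$ if and only if $\rho \ge \min_{i \in [N]} \kappa_{i,\gamma}$. -/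
open MeasureTheory Finset TopologicalSpace Metric
open scoped ENNReal

/-!
A probability measure `Q` that charges `N_γ(x₀) × Y` and is `W∞`-close to `P̂` must, by the
support of an almost optimal coupling, put some point of `N_γ(x₀) × Y` within distance
`ρ + ε` of an atom `(x̂ᵢ, ŷᵢ)`, so `κᵢ ≤ ρ + ε`. Conversely, moving only the atom with the
smallest `κᵢ` to its nearest point of `N_γ(x₀)` gives a feasible `Q`, with the transport plan
that pairs the atoms one by one.
-/

noncomputable def WinfD {A : Type*} [MeasurableSpace A] (D : A → A → ℝ≥0∞)
    (Q P : Measure A) : ℝ≥0∞ :=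
  ⨅ pi ∈ {pi : Measure (A × A) | pi.map Prod.fst = Q ∧ pi.map Prod.snd = P},
    essSup (fun p : A × A => D p.1 p.2) pi

section WinfD

variable {A : Type*} [MeasurableSpace A] {D : A → A → ℝ≥0∞} {Q P : Measure A} {r : ℝ≥0∞}

lemma WinfD_le_of_ae_le {π : Measure (A × A)} (hfst : π.map Prod.fst = Q)
    (hsnd : π.map Prod.snd = P) (h : ∀ᵐ p ∂π, D p.1 p.2 ≤ r) : WinfD D Q P ≤ r :=
  (iInf₂_le π ⟨hfst, hsnd⟩).trans (essSup_le_of_ae_le r h)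

lemma exists_coupling_ae_lt_of_WinfD_lt (h : WinfD D Q P < r) :
    ∃ π : Measure (A × A), π.map Prod.fst = Q ∧ π.map Prod.snd = P ∧
      ∀ᵐ p ∂π, D p.1 p.2 < r := by
  simp only [WinfD, iInf_lt_iff, Set.mem_ofPred_eq] at h
  obtain ⟨π, ⟨hfst, hsnd⟩, hπ⟩ := h
  exact ⟨π, hfst, hsnd, ENNReal.ae_le_essSup _ |>.mono fun _ hp => hp.trans_lt hπ⟩

end WinfD

section EmpiricalMeasure

variable {A B : Type*} [MeasurableSpace A] [MeasurableSpace B] {N : ℕ}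

noncomputable def empiricalMeasure (a : Fin N → A) : Measure A :=
  (N : ℝ≥0∞)⁻¹ • ∑ i, Measure.dirac (a i)

lemma isProbabilityMeasure_empiricalMeasure (hN : N ≠ 0) (a : Fin N → A) :
    IsProbabilityMeasure (empiricalMeasure a) := by
  constructor
  simp only [empiricalMeasure, Measure.smul_apply, Measure.finsetSum_apply, measure_univ,
    sum_const, card_univ, Fintype.card_fin, nsmul_eq_mul, mul_one, smul_eq_mul]
  exact ENNReal.inv_mul_cancel (Nat.cast_ne_zero.mpr hN) (ENNReal.natCast_ne_top N)

lemma empiricalMeasure_pos_of_mem {a : Fin N → A} {s : Set A} {i : Fin N} (hi : a i ∈ s) :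
    0 < empiricalMeasure a s := by
  have hterm : 1 ≤ ∑ j, Measure.dirac (a j) s :=
    (Measure.dirac_apply_of_mem hi).symm.le.trans
      (single_le_sum (f := fun j => Measure.dirac (a j) s) (fun _ _ => zero_le) (mem_univ i))
  simp only [empiricalMeasure, Measure.smul_apply, Measure.finsetSum_apply, smul_eq_mul]
  exact ENNReal.mul_pos (ENNReal.inv_ne_zero.mpr (ENNReal.natCast_ne_top N))
    (one_pos.trans_le hterm).ne'

lemma map_empiricalMeasure {f : A → B} (hf : Measurable f) (a : Fin N → A) :
    (empiricalMeasure a).map f = empiricalMeasure (f ∘ a) := by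
  simp only [empiricalMeasure, Measure.map_smul, Measure.map_finset_sum' hf.aemeasurable,
    Measure.map_dirac' hf, Function.comp_apply]

lemma ae_empiricalMeasure_of_forall [MeasurableSingletonClass A] {a : Fin N → A}
    {p : A → Prop} (h : ∀ i, p (a i)) : ∀ᵐ x ∂empiricalMeasure a, p x := by
  refine Measure.ae_smul_measure ?_ _
  rw [← Measure.sum_fintype, Measure.ae_sum_iff]
  intro i
  rw [ae_dirac_eq]
  exact h i

lemma WinfD_empiricalMeasure_le [MeasurableSingletonClass (A × A)] {D : A → A → ℝ≥0∞}
    {r : ℝ≥0∞} {a b : Fin N → A} (h : ∀ i, D (a i) (b i) ≤ r) :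
    WinfD D (empiricalMeasure a) (empiricalMeasure b) ≤ r :=
  WinfD_le_of_ae_le (π := empiricalMeasure fun i => (a i, b i))
    (map_empiricalMeasure measurable_fst _) (map_empiricalMeasure measurable_snd _)
    (ae_empiricalMeasure_of_forall h)

lemma exists_mem_lt_of_WinfD_empiricalMeasure_lt [MeasurableSingletonClass A]
    {D : A → A → ℝ≥0∞} {r : ℝ≥0∞} {Q : Measure A} {b : Fin N → A} {s : Set A}
    (hs : MeasurableSet s) (hQs : 0 < Q s) (h : WinfD D Q (empiricalMeasure b) < r) :
    ∃ x ∈ s, ∃ i, D x (b i) < r := by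
  obtain ⟨π, hfst, hsnd, hπ⟩ := exists_coupling_ae_lt_of_WinfD_lt h
  have hsupp : ∀ᵐ p ∂π, p.2 ∈ Set.range b := by
    refine ae_of_ae_map measurable_snd.aemeasurable ?_
    rw [hsnd]
    exact ae_empiricalMeasure_of_forall fun i => ⟨i, rfl⟩
  have hπs : π (Prod.fst ⁻¹' s) ≠ 0 := by
    rw [← Measure.map_apply measurable_fst hs, hfst]
    exact hQs.ne'
  obtain ⟨p, hps, hp, i, hi⟩ :=
    Measure.exists_mem_of_measure_ne_zero_of_ae hπs (ae_restrict_of_ae (hπ.and hsupp))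
  exact ⟨p.1, hps, i, hi ▸ hp⟩

end EmpiricalMeasure

theorem stmt10_general {X Y : Type*}
    [MetricSpace X]
    [MeasurableSpace X] [BorelSpace X]
    [MetricSpace Y]
    [MeasurableSpace Y] [BorelSpace Y]
    (N : ℕ) (hN : 0 < N) (xhat : Fin N → X) (yhat : Fin N → Y)
    (x0 : X) (gamma : ℝ) (rho : ℝ) (hrho : 0 ≤ rho)
    (Phat : Measure (X × Y))
    (hPhat : Phat = ((N : ℝ≥0∞))⁻¹ •
        ∑ i : Fin N, Measure.dirac ((xhat i, yhat i) : X × Y))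
    (kappa : Fin N → ℝ)
    (hkappa : ∀ i, IsLeast ((fun x => dist x (xhat i)) '' closedBall x0 gamma) (kappa i)) :
    (∃ Q : Measure (X × Y), IsProbabilityMeasure Q ∧
        WinfD (fun p q => edist p.1 q.1 + edist p.2 q.2) Q Phat ≤ ENNReal.ofReal rho ∧
        0 < Q (closedBall x0 gamma ×ˢ Set.univ)) ↔
      (⨅ i, kappa i) ≤ rho := by
  change Phat = empiricalMeasure fun i => (xhat i, yhat i) at hPhat
  subst hPhat
  have : Nonempty (Fin N) := ⟨⟨0, hN⟩⟩
  have hbdd : BddBelow (Set.range kappa) := (Set.finite_range kappa).bddBelow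
  constructor
  · rintro ⟨Q, -, hW, hQ⟩
    refine le_of_forall_pos_le_add fun ε hε => ?_
    have hlt : ENNReal.ofReal rho < ENNReal.ofReal (rho + ε) :=
      (ENNReal.ofReal_lt_ofReal_iff (by linarith)).2 (by linarith)
    obtain ⟨p, hp, i, hpi⟩ := exists_mem_lt_of_WinfD_empiricalMeasure_lt
      (measurableSet_closedBall.prod MeasurableSet.univ) hQ (hW.trans_lt hlt)
    have hdist : dist p.1 (xhat i) < rho + ε := by
      rw [← ENNReal.ofReal_lt_ofReal_iff (by linarith), ← edist_dist]
      exact le_self_add.trans_lt hpi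
    exact (ciInf_le hbdd i).trans (((hkappa i).2 ⟨p.1, hp.1, rfl⟩).trans hdist.le)
  · intro hle
    obtain ⟨i₀, hi₀⟩ := exists_eq_ciInf_of_finite (f := kappa)
    obtain ⟨x, hx, hxdist⟩ := (hkappa i₀).1
    let a := Function.update (fun i => (xhat i, yhat i)) i₀ (x, yhat i₀)
    refine ⟨empiricalMeasure a, isProbabilityMeasure_empiricalMeasure hN.ne' a,
      WinfD_empiricalMeasure_le fun i => ?_,
      empiricalMeasure_pos_of_mem (i := i₀) (by simpa [a] using hx)⟩
    rcases eq_or_ne i i₀ with rfl | hi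
    · simp only [a, Function.update_self, edist_self, add_zero, edist_dist, hxdist]
      exact ENNReal.ofReal_le_ofReal (hi₀ ▸ hle)
    · simp [a, Function.update_of_ne hi]

/-- Minimum-radius feasibility: on `X × Y` with the sum metric
`D((x,y),(x',y')) = d_X(x,x') + d_Y(y,y')`, and `κᵢ = min_{x ∈ N_γ(x₀)} d_X(x, x̂ᵢ)`,
there exists a probability measure `Q` with `W∞(Q, P̂) ≤ ρ` and
`Q(N_γ(x₀) × Y) > 0` iff `ρ ≥ minᵢ κᵢ`. -/
theorem stmt10 {X Y : Type*}
    [MetricSpace X] [SeparableSpace X] [CompleteSpace X] [ProperSpace X]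
    [MeasurableSpace X] [BorelSpace X]
    [MetricSpace Y] [SeparableSpace Y] [CompleteSpace Y]
    [MeasurableSpace Y] [BorelSpace Y]
    (N : ℕ) (hN : 0 < N) (xhat : Fin N → X) (yhat : Fin N → Y)
    (x0 : X) (gamma : ℝ) (hgamma : 0 ≤ gamma) (rho : ℝ) (hrho : 0 ≤ rho)
    (Phat : Measure (X × Y))
    (hPhat : Phat = ((N : ℝ≥0∞))⁻¹ •
        ∑ i : Fin N, Measure.dirac ((xhat i, yhat i) : X × Y))
    (kappa : Fin N → ℝ)
    (hkappa : ∀ i, IsLeast ((fun x => dist x (xhat i)) '' closedBall x0 gamma) (kappa i)) :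
    (∃ Q : Measure (X × Y), IsProbabilityMeasure Q ∧
        WinfD (fun p q => edist p.1 q.1 + edist p.2 q.2) Q Phat ≤ ENNReal.ofReal rho ∧
        0 < Q (closedBall x0 gamma ×ˢ Set.univ)) ↔
      (⨅ i, kappa i) ≤ rho :=
  stmt10_general N hN xhat yhat x0 gamma rho hrho Phat hPhat kappa hkappa
end

section
/- Fix $x_0$, $\gamma \ge 0$, and let $\mathbb{B}$ be a convex set of probability measures on $\mathcal{X} \times \mathcal{Y}$. Define the conditional set $\mathcal{B} = \{\mu_0 \in \mathcal{M}(\mathcal{Y}) : \exists \mathbb{Q} \in \mathbb{B},\ \mathbb{Q}(\mathcal{N}_\gamma(x_0) \times \mathcal{Y}) > 0,\ \mathbb{Q}(\mathcal{N}_\gamma(x_0) \times A) = \mu_0(A)\,\mathbb{Q}(\mathcal{N}_\gamma(x_0) \times \mathcal{Y})\ \forall A \text{ measurable}\}$. Then $\mathcal{B}$ is convex. -/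
/-!
Mixing the two witnesses with weights `t, 1 - t` mixes their conditional laws with weights
proportional to `t q₁` and `(1 - t) q₀`, where `qⱼ = ℚʲ(N × Y)`. Taking
`t = λ q₀ / (λ q₀ + (1 - λ) q₁)` makes these weights `λ c` and `(1 - λ) c` with
`c = q₀ q₁ / (λ q₀ + (1 - λ) q₁) > 0`, so the mixture conditions to `λ μ₁ + (1 - λ) μ₀`.
-/

open MeasureTheory
open scoped ENNReal

namespace MeasureTheory.Measure

variable {X Y : Type*} [MeasurableSpace X] [MeasurableSpace Y]

/-- `μ` is the law of the second coordinate under `Q` conditioned on the first lying in `N`. -/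
def IsCondLawOn (Q : Measure (X × Y)) (N : Set X) (μ : Measure Y) : Prop :=
  ∀ A : Set Y, MeasurableSet A → Q (N ×ˢ A) = μ A * Q (N ×ˢ Set.univ)

lemma mixture_apply_prod_univ {Q₀ Q₁ : Measure (X × Y)} {N : Set X} {w₀ w₁ a₀ a₁ c : ℝ≥0∞}
    (hw₁ : w₁ * Q₁ (N ×ˢ Set.univ) = a₁ * c) (hw₀ : w₀ * Q₀ (N ×ˢ Set.univ) = a₀ * c)
    (ha : a₁ + a₀ = 1) :
    (w₁ • Q₁ + w₀ • Q₀) (N ×ˢ Set.univ) = c := by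
  simp only [add_apply, smul_apply, smul_eq_mul, hw₁, hw₀, ← add_mul, ha, one_mul]

lemma IsCondLawOn.mixture {Q₀ Q₁ : Measure (X × Y)} {N : Set X} {μ₀ μ₁ : Measure Y}
    (h₀ : IsCondLawOn Q₀ N μ₀) (h₁ : IsCondLawOn Q₁ N μ₁) {w₀ w₁ a₀ a₁ c : ℝ≥0∞}
    (hw₁ : w₁ * Q₁ (N ×ˢ Set.univ) = a₁ * c) (hw₀ : w₀ * Q₀ (N ×ˢ Set.univ) = a₀ * c)
    (ha : a₁ + a₀ = 1) :
    IsCondLawOn (w₁ • Q₁ + w₀ • Q₀) N (a₁ • μ₁ + a₀ • μ₀) := by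
  intro A hA
  rw [mixture_apply_prod_univ hw₁ hw₀ ha]
  calc (w₁ • Q₁ + w₀ • Q₀) (N ×ˢ A)
      = μ₁ A * (w₁ * Q₁ (N ×ˢ Set.univ)) + μ₀ A * (w₀ * Q₀ (N ×ˢ Set.univ)) := by
        simp only [add_apply, smul_apply, smul_eq_mul, h₁ A hA, h₀ A hA]
        ring
    _ = (a₁ • μ₁ + a₀ • μ₀) A * c := by
        rw [hw₁, hw₀]
        simp only [add_apply, smul_apply, smul_eq_mul]
        ring

end MeasureTheory.Measure

open MeasureTheory.Measure

lemma exists_mixing_weight {a₀ a₁ : ℝ} (ha₀ : 0 < a₀) (ha₁ : 0 < a₁) {l : ℝ}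
    (hl₀ : 0 ≤ l) (hl₁ : l ≤ 1) :
    ∃ t c : ℝ, 0 ≤ t ∧ t ≤ 1 ∧ 0 < c ∧ t * a₁ = l * c ∧ (1 - t) * a₀ = (1 - l) * c := by
  have hD : 0 < l * a₀ + (1 - l) * a₁ := by
    rcases hl₀.eq_or_lt with rfl | hl
    · simpa using ha₁
    · nlinarith [mul_pos hl ha₀, mul_nonneg (sub_nonneg.2 hl₁) ha₁.le]
  refine ⟨l * a₀ / (l * a₀ + (1 - l) * a₁), a₀ * a₁ / (l * a₀ + (1 - l) * a₁),
    by positivity, ?_, by positivity, ?_, ?_⟩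
  · rw [div_le_one hD]
    nlinarith [mul_nonneg (sub_nonneg.2 hl₁) ha₁.le]
  · field_simp
  · field_simp
    ring

lemma ENNReal.exists_mixing_weight {q₀ q₁ : ℝ≥0∞} (hq₀ : 0 < q₀) (hq₀' : q₀ ≠ ⊤)
    (hq₁ : 0 < q₁) (hq₁' : q₁ ≠ ⊤) {l : ℝ} (hl₀ : 0 ≤ l) (hl₁ : l ≤ 1) :
    ∃ t : ℝ, 0 ≤ t ∧ t ≤ 1 ∧ ∃ c : ℝ≥0∞, 0 < c ∧
      ENNReal.ofReal t * q₁ = ENNReal.ofReal l * c ∧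
      ENNReal.ofReal (1 - t) * q₀ = ENNReal.ofReal (1 - l) * c := by
  obtain ⟨t, c, ht₀, ht₁, hc, h₁, h₀⟩ := _root_.exists_mixing_weight
    (ENNReal.toReal_pos hq₀.ne' hq₀') (ENNReal.toReal_pos hq₁.ne' hq₁') hl₀ hl₁
  refine ⟨t, ht₀, ht₁, ENNReal.ofReal c, ENNReal.ofReal_pos.2 hc, ?_, ?_⟩
  · rw [← ENNReal.ofReal_toReal hq₁', ← ENNReal.ofReal_mul ht₀, ← ENNReal.ofReal_mul hl₀, h₁]
  · rw [← ENNReal.ofReal_toReal hq₀', ← ENNReal.ofReal_mul (sub_nonneg.2 ht₁),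
      ← ENNReal.ofReal_mul (sub_nonneg.2 hl₁), h₀]

theorem stmt12_general {X Y : Type*} [MeasurableSpace X] [MeasurableSpace Y]
    (B : Set (Measure (X × Y))) (hprob : ∀ Q ∈ B, IsProbabilityMeasure Q)
    (hconv : ∀ Q0 ∈ B, ∀ Q1 ∈ B, ∀ t : ℝ, 0 ≤ t → t ≤ 1 →
      ENNReal.ofReal t • Q1 + ENNReal.ofReal (1 - t) • Q0 ∈ B)
    (Nset : Set X)
    (mu0 mu1 : Measure Y)
    (h0 : ∃ Q ∈ B, 0 < Q (Nset ×ˢ Set.univ) ∧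
      ∀ A : Set Y, MeasurableSet A → Q (Nset ×ˢ A) = mu0 A * Q (Nset ×ˢ Set.univ))
    (h1 : ∃ Q ∈ B, 0 < Q (Nset ×ˢ Set.univ) ∧
      ∀ A : Set Y, MeasurableSet A → Q (Nset ×ˢ A) = mu1 A * Q (Nset ×ˢ Set.univ))
    (lam : ℝ) (hlam0 : 0 ≤ lam) (hlam1 : lam ≤ 1) :
    ∃ Q ∈ B, 0 < Q (Nset ×ˢ Set.univ) ∧
      ∀ A : Set Y, MeasurableSet A →
        Q (Nset ×ˢ A) =
          (ENNReal.ofReal lam • mu1 + ENNReal.ofReal (1 - lam) • mu0) A *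
            Q (Nset ×ˢ Set.univ) := by
  obtain ⟨Q₀, hQ₀, hq₀, hcond₀⟩ := h0
  obtain ⟨Q₁, hQ₁, hq₁, hcond₁⟩ := h1
  have := hprob Q₀ hQ₀
  have := hprob Q₁ hQ₁
  obtain ⟨t, ht₀, ht₁, c, hc, hw₁, hw₀⟩ := ENNReal.exists_mixing_weight hq₀
    (measure_ne_top Q₀ _) hq₁ (measure_ne_top Q₁ _) hlam0 hlam1
  have hweights : ENNReal.ofReal lam + ENNReal.ofReal (1 - lam) = 1 := by
    rw [← ENNReal.ofReal_add hlam0 (sub_nonneg.2 hlam1), add_sub_cancel, ENNReal.ofReal_one]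
  refine ⟨_, hconv Q₀ hQ₀ Q₁ hQ₁ t ht₀ ht₁, ?_,
    IsCondLawOn.mixture hcond₀ hcond₁ hw₁ hw₀ hweights⟩
  rwa [mixture_apply_prod_univ hw₁ hw₀ hweights]

/-- Convexity of the conditional ambiguity set: if `B` is a convex set of probability
measures on `X × Y` and `𝒞` is the set of conditional distributions of `Y` given
`X ∈ N` induced by members of `B` charging `N × Y` positively, then `𝒞` is convex. -/
theorem stmt12 {X Y : Type*} [MeasurableSpace X] [MeasurableSpace Y]
    (B : Set (Measure (X × Y))) (hprob : ∀ Q ∈ B, IsProbabilityMeasure Q)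
    (hconv : ∀ Q0 ∈ B, ∀ Q1 ∈ B, ∀ t : ℝ, 0 ≤ t → t ≤ 1 →
      ENNReal.ofReal t • Q1 + ENNReal.ofReal (1 - t) • Q0 ∈ B)
    (Nset : Set X) (hNset : MeasurableSet Nset)
    (mu0 mu1 : Measure Y) [IsProbabilityMeasure mu0] [IsProbabilityMeasure mu1]
    (h0 : ∃ Q ∈ B, 0 < Q (Nset ×ˢ Set.univ) ∧
      ∀ A : Set Y, MeasurableSet A → Q (Nset ×ˢ A) = mu0 A * Q (Nset ×ˢ Set.univ))
    (h1 : ∃ Q ∈ B, 0 < Q (Nset ×ˢ Set.univ) ∧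
      ∀ A : Set Y, MeasurableSet A → Q (Nset ×ˢ A) = mu1 A * Q (Nset ×ˢ Set.univ))
    (lam : ℝ) (hlam0 : 0 ≤ lam) (hlam1 : lam ≤ 1) :
    ∃ Q ∈ B, 0 < Q (Nset ×ˢ Set.univ) ∧
      ∀ A : Set Y, MeasurableSet A →
        Q (Nset ×ˢ A) =
          (ENNReal.ofReal lam • mu1 + ENNReal.ofReal (1 - lam) • mu0) A *
            Q (Nset ×ˢ Set.univ) :=
  stmt12_general B hprob hconv Nset mu0 mu1 h0 h1 lam hlam0 hlam1
end

section
/- Let $a \le b$ be reals, $\rho > 0$, and suppose for each $i$ in a nonempty finite index set $\mathcal{I}$ we are given $\widehat{y}_i \in \mathbb{R}$ and costs $c_i \ge 0$ with $c_i \le \rho$. Consider $f(\beta) = \max_{i \in \mathcal{I}} \max\{(\widehat{y}_i - \rho + c_i - \beta)^2, (\widehat{y}_i + \rho - c_i - \beta)^2\}$ (the worst-case squared loss when every point can be perturbed). Then the minimizer of $f$ over $\beta \in \mathbb{R}$ is $\beta^\star = \tfrac{1}{2}\min_{i\in\mathcal{I}}(\widehat{y}_i - \rho + c_i) + \tfrac{1}{2}\max_{i\in\mathcal{I}}(\widehat{y}_i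 + \rho - c_i)$. -/
open Finset

/-!
Every endpoint `ŷᵢ ∓ (ρ - cᵢ)` lies in `[m, M]`, where `m` is the smallest left endpoint and `M`
the largest right endpoint, so at the midpoint of `[m, M]` the loss is at most `((M - m) / 2)²`.
For any other `β`, the loss at `β` is at least the squared distance from `β` to the farther of
`m` and `M`, which exceeds `((M - m) / 2)²` by at least the square of the distance from `β` to the
midpoint.
-/

lemma sq_sub_midpoint_le {lo hi x : ℝ} (hlo : lo ≤ x) (hhi : x ≤ hi) :
    (x - (lo / 2 + hi / 2)) ^ 2 ≤ ((hi - lo) / 2) ^ 2 := by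
  nlinarith

lemma sq_half_sub_add_sq_sub_midpoint_le_max {lo hi : ℝ} (h : lo ≤ hi) (β : ℝ) :
    ((hi - lo) / 2) ^ 2 + (β - (lo / 2 + hi / 2)) ^ 2 ≤ max ((lo - β) ^ 2) ((hi - β) ^ 2) := by
  rcases le_total β (lo / 2 + hi / 2) with hβ | hβ
  · exact le_max_of_le_right (by nlinarith)
  · exact le_max_of_le_left (by nlinarith)

theorem sup'_max_sq_sub_midpoint_add_sq_le {ι : Type*} (I : Finset ι) (hI : I.Nonempty)
    (l u : ι → ℝ) (hlu : ∀ i ∈ I, l i ≤ u i) (β : ℝ) :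
    (I.sup' hI fun i =>
        max ((l i - (I.inf' hI l / 2 + I.sup' hI u / 2)) ^ 2)
          ((u i - (I.inf' hI l / 2 + I.sup' hI u / 2)) ^ 2)) +
        (β - (I.inf' hI l / 2 + I.sup' hI u / 2)) ^ 2 ≤
      I.sup' hI fun i => max ((l i - β) ^ 2) ((u i - β) ^ 2) := by
  obtain ⟨i₀, hi₀, hm⟩ := exists_mem_eq_inf' hI l
  obtain ⟨i₁, hi₁, hM⟩ := exists_mem_eq_sup' hI u
  set m := I.inf' hI l
  set M := I.sup' hI u
  have hl_le_M : ∀ i ∈ I, l i ≤ M := fun i hi => (hlu i hi).trans (le_sup' u hi)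
  have hm_le_u : ∀ i ∈ I, m ≤ u i := fun i hi => (inf'_le l hi).trans (hlu i hi)
  have h_mid : (I.sup' hI fun i => max ((l i - (m / 2 + M / 2)) ^ 2)
      ((u i - (m / 2 + M / 2)) ^ 2)) ≤ ((M - m) / 2) ^ 2 :=
    sup'_le _ _ fun i hi => max_le (sq_sub_midpoint_le (inf'_le l hi) (hl_le_M i hi))
      (sq_sub_midpoint_le (hm_le_u i hi) (le_sup' u hi))
  have h_ends : max ((m - β) ^ 2) ((M - β) ^ 2) ≤
      I.sup' hI fun i => max ((l i - β) ^ 2) ((u i - β) ^ 2) := by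
    rw [hm, hM]
    exact max_le ((le_max_left _ _).trans (le_sup' (fun i => max ((l i - β) ^ 2) _) hi₀))
      ((le_max_right _ _).trans (le_sup' (fun i => max _ ((u i - β) ^ 2)) hi₁))
  have hmM : m ≤ M := hm_le_u i₀ hi₀ |>.trans (le_sup' u hi₀)
  linarith [sq_half_sub_add_sq_sub_midpoint_le_max hmM β]

theorem stmt17_general {ι : Type*} (I : Finset ι) (hI : I.Nonempty)
    (rho : ℝ) (yhat c : ι → ℝ)
    (hc : ∀ i ∈ I, 0 ≤ c i ∧ c i ≤ rho) :
    ∀ beta : ℝ,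
      (I.sup' hI fun i =>
          max ((yhat i - rho + c i - ((I.inf' hI fun j => yhat j - rho + c j) / 2 +
              (I.sup' hI fun j => yhat j + rho - c j) / 2)) ^ 2)
            ((yhat i + rho - c i - ((I.inf' hI fun j => yhat j - rho + c j) / 2 +
              (I.sup' hI fun j => yhat j + rho - c j) / 2)) ^ 2)) ≤
        (I.sup' hI fun i =>
          max ((yhat i - rho + c i - beta) ^ 2) ((yhat i + rho - c i - beta) ^ 2)) ∧
      (beta ≠ (I.inf' hI fun j => yhat j - rho + c j) / 2 +
          (I.sup' hI fun j => yhat j + rho - c j) / 2 →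
        (I.sup' hI fun i =>
            max ((yhat i - rho + c i - ((I.inf' hI fun j => yhat j - rho + c j) / 2 +
                (I.sup' hI fun j => yhat j + rho - c j) / 2)) ^ 2)
              ((yhat i + rho - c i - ((I.inf' hI fun j => yhat j - rho + c j) / 2 +
                (I.sup' hI fun j => yhat j + rho - c j) / 2)) ^ 2)) <
          (I.sup' hI fun i =>
            max ((yhat i - rho + c i - beta) ^ 2) ((yhat i + rho - c i - beta) ^ 2))) := by
  intro beta
  have key := sup'_max_sq_sub_midpoint_add_sq_le I hI (fun i => yhat i - rho + c i)
    (fun i => yhat i + rho - c i) (fun i hi => by linarith [(hc i hi).2]) beta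
  refine ⟨by linarith [sq_nonneg (beta - ((I.inf' hI fun j => yhat j - rho + c j) / 2 +
    (I.sup' hI fun j => yhat j + rho - c j) / 2))], fun hne => ?_⟩
  linarith [sq_pos_of_ne_zero (sub_ne_zero.mpr hne)]

/-- The worst-case squared loss `f(β) = maxᵢ max{(ŷᵢ-ρ+cᵢ-β)², (ŷᵢ+ρ-cᵢ-β)²}` is
uniquely minimized at the midpoint
`β⋆ = (minᵢ (ŷᵢ-ρ+cᵢ))/2 + (maxᵢ (ŷᵢ+ρ-cᵢ))/2`. -/
theorem stmt17 {ι : Type*} (I : Finset ι) (hI : I.Nonempty) (a b : ℝ) (hab : a ≤ b)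
    (rho : ℝ) (hrho : 0 < rho) (yhat c : ι → ℝ)
    (hc : ∀ i ∈ I, 0 ≤ c i ∧ c i ≤ rho) :
    ∀ beta : ℝ,
      (I.sup' hI fun i =>
          max ((yhat i - rho + c i - ((I.inf' hI fun j => yhat j - rho + c j) / 2 +
              (I.sup' hI fun j => yhat j + rho - c j) / 2)) ^ 2)
            ((yhat i + rho - c i - ((I.inf' hI fun j => yhat j - rho + c j) / 2 +
              (I.sup' hI fun j => yhat j + rho - c j) / 2)) ^ 2)) ≤
        (I.sup' hI fun i =>
          max ((yhat i - rho + c i - beta) ^ 2) ((yhat i + rho - c i - beta) ^ 2)) ∧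
      (beta ≠ (I.inf' hI fun j => yhat j - rho + c j) / 2 +
          (I.sup' hI fun j => yhat j + rho - c j) / 2 →
        (I.sup' hI fun i =>
            max ((yhat i - rho + c i - ((I.inf' hI fun j => yhat j - rho + c j) / 2 +
                (I.sup' hI fun j => yhat j + rho - c j) / 2)) ^ 2)
              ((yhat i + rho - c i - ((I.inf' hI fun j => yhat j - rho + c j) / 2 +
                (I.sup' hI fun j => yhat j + rho - c j) / 2)) ^ 2)) <
          (I.sup' hI fun i =>
            max ((yhat i - rho + c i - beta) ^ 2) ((yhat i + rho - c i - beta) ^ 2))) :=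
  stmt17_general I hI rho yhat c hc
end

section
/- Let $v_i^\star \in \mathbb{R}$ for $i$ in a finite set $\mathcal{I}$, partitioned as $\mathcal{I} = \mathcal{I}_1 \cup \mathcal{I}_2$ with $\mathcal{I}_1 \ne \emptyset$. Then the maximum of $(\sum_{i\in\mathcal{I}_1} v_i^\star + \sum_{i\in\mathcal{I}_2} v_i^\star \alpha_i)/(|\mathcal{I}_1| + \sum_{i\in\mathcal{I}_2} \alpha_i)$ over $\alpha \in [0,1]^{\mathcal{I}_2}$ equals the maximum over binary $\alpha \in \{0,1\}^{\mathcal{I}_2}$, and is at least $\max\{\overline{v}_1, \max_{i\in\mathcal{I}_2} (\sum_{j\in\mathcal{I}_1} v_j^\star + v_i^\star)/(|\mathcal{I}_1|+1)\}$, where $\overline{v}_1 = |\mathcal{I}_1|^{-1}\sum_{i\in\mathcal{I}_1} v_i^\star$. -/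
/-! With all other weights fixed, the objective is a linear-fractional function of a single
weight `αᵢ`, hence maximised at `αᵢ = 0` or `αᵢ = 1`. Rounding the weights one at a time shows that
some subset of `I₂` does at least as well as any fractional `α`; a best subset then beats in
particular `∅` and every singleton, which are the two lower bounds. -/

open Finset

/-- The ratio is a weighted average of its values at `t = 0` and `t = 1`, with weights
`(1 - t) B` and `t (B + 1)`. -/
lemma add_mul_div_add_le_max {A B c t : ℝ} (hB : 0 < B) (ht₀ : 0 ≤ t) (ht₁ : t ≤ 1) :
    (A + c * t) / (B + t) ≤ max (A / B) ((A + c) / (B + 1)) := by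
  set M := max (A / B) ((A + c) / (B + 1))
  have h₀ : A ≤ M * B := (div_le_iff₀ hB).mp (le_max_left _ _)
  have h₁ : A + c ≤ M * (B + 1) := (div_le_iff₀ (by linarith)).mp (le_max_right _ _)
  rw [div_le_iff₀ (by linarith)]
  nlinarith [mul_le_mul_of_nonneg_left h₀ (sub_nonneg.mpr ht₁), mul_le_mul_of_nonneg_left h₁ ht₀]

lemma exists_subset_div_le {ι : Type*} [DecidableEq ι] (v α : ι → ℝ) (s : Finset ι)
    (hα : ∀ i ∈ s, 0 ≤ α i ∧ α i ≤ 1) {A B : ℝ} (hB : 0 < B) :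
    ∃ S ⊆ s, (A + ∑ i ∈ s, v i * α i) / (B + ∑ i ∈ s, α i) ≤
      (A + ∑ i ∈ S, v i) / (B + #S) := by
  induction s using Finset.induction_on generalizing A B with
  | empty => exact ⟨∅, Subset.rfl, by simp⟩
  | @insert a s ha ih =>
    obtain ⟨ha₀, ha₁⟩ := hα a (mem_insert_self a s)
    obtain ⟨S, hSs, hS⟩ := ih (fun i hi ↦ hα i (mem_insert_of_mem hi))
      (A := A + v a * α a) (B := B + α a) (by linarith)
    have hBS : 0 < B + #S := by positivity
    have hend := add_mul_div_add_le_max (A := A + ∑ i ∈ S, v i) (c := v a) hBS ha₀ ha₁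
    have hrearr : (A + ∑ i ∈ insert a s, v i * α i) / (B + ∑ i ∈ insert a s, α i) =
        (A + v a * α a + ∑ i ∈ s, v i * α i) / (B + α a + ∑ i ∈ s, α i) := by
      rw [sum_insert ha, sum_insert ha, ← add_assoc, ← add_assoc]
    have hmid : (A + v a * α a + ∑ i ∈ S, v i) / (B + α a + #S) =
        (A + ∑ i ∈ S, v i + v a * α a) / (B + #S + α a) := by
      rw [add_right_comm A, add_right_comm B]
    rw [hrearr]
    have hbound := hS.trans (hmid.trans_le hend)
    rcases max_choice ((A + ∑ i ∈ S, v i) / (B + #S))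
        ((A + ∑ i ∈ S, v i + v a) / (B + #S + 1)) with hmax | hmax <;> rw [hmax] at hbound
    · exact ⟨S, hSs.trans (subset_insert a s), hbound⟩
    · have haS : a ∉ S := fun h ↦ ha (hSs h)
      refine ⟨insert a S, insert_subset_insert a hSs, hbound.trans_eq ?_⟩
      rw [sum_insert haS, card_insert_of_notMem haS]
      push_cast
      ring

lemma sum_mul_ite_mem_of_subset {ι : Type*} [DecidableEq ι] (v : ι → ℝ) {S s : Finset ι}
    (hS : S ⊆ s) : ∑ i ∈ s, v i * (if i ∈ S then 1 else 0) = ∑ i ∈ S, v i := by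
  simp_rw [mul_ite, mul_one, mul_zero]
  rw [sum_ite_mem, inter_eq_right.mpr hS]

theorem stmt18_general {ι : Type*} (I1 I2 : Finset ι)
    (h1 : I1.Nonempty) (v : ι → ℝ) :
    ∃ alpha : ι → ℝ, (∀ i ∈ I2, alpha i = 0 ∨ alpha i = 1) ∧
      (∀ alpha' : ι → ℝ, (∀ i ∈ I2, 0 ≤ alpha' i ∧ alpha' i ≤ 1) →
        (∑ i ∈ I1, v i + ∑ i ∈ I2, v i * alpha' i) /
            ((I1.card : ℝ) + ∑ i ∈ I2, alpha' i) ≤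
          (∑ i ∈ I1, v i + ∑ i ∈ I2, v i * alpha i) /
            ((I1.card : ℝ) + ∑ i ∈ I2, alpha i)) ∧
      ((I1.card : ℝ)⁻¹ * ∑ i ∈ I1, v i ≤
          (∑ i ∈ I1, v i + ∑ i ∈ I2, v i * alpha i) /
            ((I1.card : ℝ) + ∑ i ∈ I2, alpha i)) ∧
      (∀ i ∈ I2, (∑ j ∈ I1, v j + v i) / ((I1.card : ℝ) + 1) ≤
          (∑ j ∈ I1, v j + ∑ j ∈ I2, v j * alpha j) /
            ((I1.card : ℝ) + ∑ j ∈ I2, alpha j)) := by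
  classical
  have hn : (0 : ℝ) < #I1 := by exact_mod_cast h1.card_pos
  obtain ⟨S, hSI2, hSmax⟩ := exists_max_image I2.powerset
    (fun S ↦ (∑ i ∈ I1, v i + ∑ i ∈ S, v i) / (#I1 + #S)) ⟨∅, empty_mem_powerset I2⟩
  rw [mem_powerset] at hSI2
  have hbest (T : Finset ι) (hT : T ⊆ I2) := hSmax T (mem_powerset.mpr hT)
  refine ⟨fun i ↦ if i ∈ S then 1 else 0, fun i _ ↦ (ite_eq_or_eq _ _ _).symm, ?_⟩
  have hcard : ∑ i ∈ I2, (if i ∈ S then (1 : ℝ) else 0) = #S := by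
    simpa using sum_mul_ite_mem_of_subset (fun _ ↦ (1 : ℝ)) hSI2
  rw [sum_mul_ite_mem_of_subset v hSI2, hcard]
  refine ⟨fun α hα ↦ ?_, ?_, fun i hi ↦ ?_⟩
  · obtain ⟨T, hT, hle⟩ := exists_subset_div_le v α I2 hα hn
    exact hle.trans (hbest T hT)
  · simpa [inv_mul_eq_div] using hbest ∅ (empty_subset I2)
  · simpa using hbest {i} (singleton_subset_iff.mpr hi)

/-- Structure of the worst-case conditional expected loss: the fractional linear
objective `(∑_{I₁} vᵢ + ∑_{I₂} vᵢ αᵢ)/(|I₁| + ∑_{I₂} αᵢ)` over `α ∈ [0,1]^{I₂}` attains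
its maximum at a binary point, and the maximum is at least `v̄₁` and at least
`(∑_{I₁} vⱼ + vᵢ)/(|I₁|+1)` for each `i ∈ I₂`. -/
theorem stmt18 {ι : Type*} (I1 I2 : Finset ι) (hdisj : Disjoint I1 I2)
    (h1 : I1.Nonempty) (v : ι → ℝ) :
    ∃ alpha : ι → ℝ, (∀ i ∈ I2, alpha i = 0 ∨ alpha i = 1) ∧
      (∀ alpha' : ι → ℝ, (∀ i ∈ I2, 0 ≤ alpha' i ∧ alpha' i ≤ 1) →
        (∑ i ∈ I1, v i + ∑ i ∈ I2, v i * alpha' i) /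
            ((I1.card : ℝ) + ∑ i ∈ I2, alpha' i) ≤
          (∑ i ∈ I1, v i + ∑ i ∈ I2, v i * alpha i) /
            ((I1.card : ℝ) + ∑ i ∈ I2, alpha i)) ∧
      ((I1.card : ℝ)⁻¹ * ∑ i ∈ I1, v i ≤
          (∑ i ∈ I1, v i + ∑ i ∈ I2, v i * alpha i) /
            ((I1.card : ℝ) + ∑ i ∈ I2, alpha i)) ∧
      (∀ i ∈ I2, (∑ j ∈ I1, v j + v i) / ((I1.card : ℝ) + 1) ≤
          (∑ j ∈ I1, v j + ∑ j ∈ I2, v j * alpha j) /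
            ((I1.card : ℝ) + ∑ j ∈ I2, alpha j)) :=
  stmt18_general I1 I2 h1 v
end
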